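/- Every MV-algebra A with the product defined by the supremum for non-zero elements, namely a·b := a ∨ b if a ≠ 0 and b ≠ 0, and a·b := 0 otherwise, is an MVW-rig: this product is associative, commutative, and satisfies, for all a, b, c ∈ A, a·0 = 0, a·(b ⊕ c) ≤ a·b ⊕ a·c, and a·b ⊖ a·c ≤ a·(b ⊖ c). -/

import Mathlib

/-- The data of an MV-algebra: a binary sum, a negation and a zero. -/
structure MVData (A : Type*) where
  add : A → A → A
  neg : A → A
  zero : A

namespace MVData

variable {A : Type*} (m : MVData A)

/-- The top element `u = ¬0`. -/
def unit : A := m.neg m.zero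

/-- Truncated difference `x ⊖ y = ¬(¬x ⊕ y)`. -/
def ominus (x y : A) : A := m.neg (m.add (m.neg x) y)

/-- The product `x ⊙ y = ¬(¬x ⊕ ¬y)`. -/
def odot (x y : A) : A := m.neg (m.add (m.neg x) (m.neg y))

/-- The MV order: `x ≤ y` iff `x ⊖ y = 0`. -/
def le (x y : A) : Prop := m.ominus x y = m.zero

/-- The lattice join `x ∨ y = (x ⊖ y) ⊕ y`. -/
def sup (x y : A) : A := m.add (m.ominus x y) y

/-- The lattice meet `x ∧ y = ¬(¬x ∨ ¬y)`. -/
def inf (x y : A) : A := m.neg (m.sup (m.neg x) (m.neg y))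

/-- The MV-algebra axioms: `(A, ⊕, 0)` is a commutative monoid and `¬` satisfies
`¬¬x = x`, `x ⊕ ¬0 = ¬0` and `¬(¬x ⊕ y) ⊕ y = ¬(¬y ⊕ x) ⊕ x`. -/
structure IsMV : Prop where
  add_assoc : ∀ x y z : A, m.add (m.add x y) z = m.add x (m.add y z)
  add_comm : ∀ x y : A, m.add x y = m.add y x
  add_zero : ∀ x : A, m.add x m.zero = x
  neg_neg : ∀ x : A, m.neg (m.neg x) = x
  add_unit : ∀ x : A, m.add x (m.neg m.zero) = m.neg m.zero
  lukasiewicz : ∀ x y : A,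
    m.add (m.neg (m.add (m.neg x) y)) y = m.add (m.neg (m.add (m.neg y) x)) x

end MVData

open scoped Classical in
/-- The product given by the supremum on non-zero elements: `a·b = a ∨ b` if
`a ≠ 0` and `b ≠ 0`, and `a·b = 0` otherwise. -/
noncomputable def MVData.supProd {A : Type*} (m : MVData A) (a b : A) : A :=
  if a = m.zero ∨ b = m.zero then m.zero else m.sup a b

/-! Off zero the product is the join, so it inherits associativity and commutativity from `∨`,
and the two inequalities become the MV-algebra facts `a ∨ (b ⊕ c) ≤ (a ∨ b) ⊕ (a ∨ c)` and
`(a ∨ b) ⊖ (a ∨ c) ≤ a ∨ (b ⊖ c)`. The remaining cases (a zero factor, or `b ≤ c` in the second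
inequality) are immediate, since the product vanishes only at a zero factor and is monotone. -/

namespace MVData

variable {A : Type*} {m : MVData A}

theorem supProd_eq_zero {a b : A} (hab : a = m.zero ∨ b = m.zero) :
    m.supProd a b = m.zero := by
  rw [supProd, if_pos hab]

theorem supProd_zero_left (b : A) : m.supProd m.zero b = m.zero :=
  supProd_eq_zero (.inl rfl)

theorem supProd_zero_right (a : A) : m.supProd a m.zero = m.zero :=
  supProd_eq_zero (.inr rfl)

theorem supProd_of_ne_zero {a b : A} (ha : a ≠ m.zero) (hb : b ≠ m.zero) :
    m.supProd a b = m.sup a b := by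
  rw [supProd, if_neg (not_or.2 ⟨ha, hb⟩)]

namespace IsMV

variable (h : m.IsMV)
include h

theorem zero_add (x : A) : m.add m.zero x = x := by
  rw [h.add_comm, h.add_zero]

theorem unit_add (x : A) : m.add (m.neg m.zero) x = m.neg m.zero := by
  rw [h.add_comm, h.add_unit]

theorem neg_add_self (x : A) : m.add (m.neg x) x = m.neg m.zero := by
  have hl := h.lukasiewicz x (m.neg m.zero)
  rw [h.add_unit, h.neg_neg, h.zero_add] at hl
  exact hl.symm

theorem le_refl (x : A) : m.le x x := by
  show m.neg (m.add (m.neg x) x) = m.zero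
  rw [h.neg_add_self, h.neg_neg]

theorem zero_le (x : A) : m.le m.zero x := by
  show m.neg (m.add (m.neg m.zero) x) = m.zero
  rw [h.unit_add, h.neg_neg]

theorem ominus_zero (x : A) : m.ominus x m.zero = x := by
  show m.neg (m.add (m.neg x) m.zero) = x
  rw [h.add_zero, h.neg_neg]

theorem le_add_left (x y : A) : m.le x (m.add y x) := by
  show m.neg (m.add (m.neg x) (m.add y x)) = m.zero
  rw [h.add_comm y x, ← h.add_assoc, h.neg_add_self, h.unit_add, h.neg_neg]

theorem le_add_right (x y : A) : m.le x (m.add x y) := by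
  rw [h.add_comm]
  exact h.le_add_left x y

theorem sup_comm (x y : A) : m.sup x y = m.sup y x :=
  h.lukasiewicz x y

theorem le_antisymm {x y : A} (hxy : m.le x y) (hyx : m.le y x) : x = y := by
  have hl := h.lukasiewicz x y
  rw [show m.neg (m.add (m.neg x) y) = m.zero from hxy,
    show m.neg (m.add (m.neg y) x) = m.zero from hyx, h.zero_add, h.zero_add] at hl
  exact hl.symm

theorem eq_zero_of_le_zero {x : A} (hx : m.le x m.zero) : x = m.zero :=
  h.le_antisymm hx (h.zero_le x)

theorem sup_of_le_right {x y : A} (hxy : m.le x y) : m.sup x y = y := by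
  show m.add (m.ominus x y) y = y
  rw [show m.ominus x y = m.zero from hxy, h.zero_add]

theorem sup_of_le_left {x y : A} (hyx : m.le y x) : m.sup x y = x := by
  rw [h.sup_comm, h.sup_of_le_right hyx]

theorem add_le_add_left {x y : A} (hxy : m.le x y) (z : A) :
    m.le (m.add z x) (m.add z y) := by
  have hy : m.add (m.ominus y x) x = y := h.sup_of_le_left hxy
  rw [← hy, h.add_comm (m.ominus y x), ← h.add_assoc]
  exact h.le_add_right _ _

theorem add_le_add_right {x y : A} (hxy : m.le x y) (z : A) :
    m.le (m.add x z) (m.add y z) := by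
  rw [h.add_comm x, h.add_comm y]
  exact h.add_le_add_left hxy z

theorem le_trans {x y z : A} (hxy : m.le x y) (hyz : m.le y z) : m.le x z := by
  have hy : m.add (m.ominus y x) x = y := h.sup_of_le_left hxy
  have hz : m.add (m.ominus z y) y = z := h.sup_of_le_left hyz
  rw [← hz, ← hy, ← h.add_assoc]
  exact h.le_add_left x _

theorem add_le_add {x x' y y' : A} (hx : m.le x x') (hy : m.le y y') :
    m.le (m.add x y) (m.add x' y') :=
  h.le_trans (h.add_le_add_right hx y) (h.add_le_add_left hy x')

theorem neg_le_neg {x y : A} (hxy : m.le x y) : m.le (m.neg y) (m.neg x) := by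
  show m.neg (m.add (m.neg (m.neg y)) (m.neg x)) = m.zero
  rw [h.neg_neg, h.add_comm]
  exact hxy

theorem ominus_le_ominus_right {x y : A} (hxy : m.le x y) (z : A) :
    m.le (m.ominus x z) (m.ominus y z) :=
  h.neg_le_neg (h.add_le_add_right (h.neg_le_neg hxy) z)

theorem ominus_le_of_le_add {x y z : A} (hx : m.le x (m.add y z)) :
    m.le (m.ominus x z) y := by
  refine h.le_trans (h.ominus_le_ominus_right hx z) ?_
  show m.neg (m.add (m.neg (m.neg (m.add (m.neg (m.add y z)) z))) y) = m.zero
  rw [h.neg_neg, h.add_assoc, h.add_comm z, h.neg_add_self, h.neg_neg]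

theorem ne_zero_of_le_ne_zero {x y : A} (hx : x ≠ m.zero) (hxy : m.le x y) : y ≠ m.zero := by
  rintro rfl
  exact hx (h.eq_zero_of_le_zero hxy)

theorem le_sup_right (x y : A) : m.le y (m.sup x y) :=
  h.le_add_left y (m.ominus x y)

theorem le_sup_left (x y : A) : m.le x (m.sup x y) := by
  rw [h.sup_comm]
  exact h.le_sup_right y x

theorem sup_le {x y z : A} (hxz : m.le x z) (hyz : m.le y z) : m.le (m.sup x y) z := by
  have hle := h.add_le_add_right (h.ominus_le_ominus_right hxz y) y
  rwa [show m.add (m.ominus z y) y = z from h.sup_of_le_left hyz] at hle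

theorem sup_le_sup_left {y z : A} (hyz : m.le y z) (x : A) : m.le (m.sup x y) (m.sup x z) :=
  h.sup_le (h.le_sup_left x z) (h.le_trans hyz (h.le_sup_right x z))

theorem sup_assoc (x y z : A) : m.sup (m.sup x y) z = m.sup x (m.sup y z) := by
  apply h.le_antisymm
  · refine h.sup_le (h.sup_le (h.le_sup_left x _) ?_) ?_
    · exact h.le_trans (h.le_sup_left y z) (h.le_sup_right x _)
    · exact h.le_trans (h.le_sup_right y z) (h.le_sup_right x _)
  · refine h.sup_le ?_ (h.sup_le ?_ (h.le_sup_right _ z))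
    · exact h.le_trans (h.le_sup_left x y) (h.le_sup_left _ z)
    · exact h.le_trans (h.le_sup_right x y) (h.le_sup_left _ z)

theorem sup_add_le_add_sup (a b c : A) :
    m.le (m.sup a (m.add b c)) (m.add (m.sup a b) (m.sup a c)) :=
  h.sup_le (h.le_trans (h.le_sup_left a b) (h.le_add_right _ _))
    (h.add_le_add (h.le_sup_right a b) (h.le_sup_right a c))

-- The key step is `b ≤ b ∨ c = (b ⊖ c) ⊕ c`.
theorem sup_ominus_sup_le (a b c : A) :
    m.le (m.ominus (m.sup a b) (m.sup a c)) (m.sup a (m.ominus b c)) :=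
  h.ominus_le_of_le_add <|
    h.sup_le (h.le_trans (h.le_sup_left a _) (h.le_add_right _ _))
      (h.le_trans (h.le_sup_left b c) (h.add_le_add (h.le_sup_right a _) (h.le_sup_right a c)))

theorem supProd_comm (a b : A) : m.supProd a b = m.supProd b a := by
  by_cases hab : a = m.zero ∨ b = m.zero
  · rw [supProd_eq_zero hab, supProd_eq_zero hab.symm]
  · obtain ⟨ha, hb⟩ := not_or.1 hab
    rw [supProd_of_ne_zero ha hb, supProd_of_ne_zero hb ha, h.sup_comm]

theorem supProd_assoc (a b c : A) :
    m.supProd (m.supProd a b) c = m.supProd a (m.supProd b c) := by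
  by_cases ha : a = m.zero
  · simp only [ha, supProd_zero_left]
  by_cases hb : b = m.zero
  · simp only [hb, supProd_zero_left, supProd_zero_right]
  by_cases hc : c = m.zero
  · simp only [hc, supProd_zero_right]
  have hab := h.ne_zero_of_le_ne_zero ha (h.le_sup_left a b)
  have hbc := h.ne_zero_of_le_ne_zero hb (h.le_sup_left b c)
  rw [supProd_of_ne_zero ha hb, supProd_of_ne_zero hb hc, supProd_of_ne_zero hab hc,
    supProd_of_ne_zero ha hbc, h.sup_assoc]

theorem supProd_le_supProd_right {b c : A} (hbc : m.le b c) (a : A) :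
    m.le (m.supProd a b) (m.supProd a c) := by
  by_cases hab : a = m.zero ∨ b = m.zero
  · rw [supProd_eq_zero hab]
    exact h.zero_le _
  obtain ⟨ha, hb⟩ := not_or.1 hab
  rw [supProd_of_ne_zero ha hb, supProd_of_ne_zero ha (h.ne_zero_of_le_ne_zero hb hbc)]
  exact h.sup_le_sup_left hbc a

theorem supProd_add_le (a b c : A) :
    m.le (m.supProd a (m.add b c)) (m.add (m.supProd a b) (m.supProd a c)) := by
  by_cases ha : a = m.zero
  · rw [ha, supProd_zero_left]
    exact h.zero_le _
  by_cases hb : b = m.zero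
  · rw [hb, h.zero_add, supProd_zero_right, h.zero_add]
    exact h.le_refl _
  by_cases hc : c = m.zero
  · rw [hc, h.add_zero, supProd_zero_right, h.add_zero]
    exact h.le_refl _
  have hbc := h.ne_zero_of_le_ne_zero hb (h.le_add_right b c)
  rw [supProd_of_ne_zero ha hbc, supProd_of_ne_zero ha hb, supProd_of_ne_zero ha hc]
  exact h.sup_add_le_add_sup a b c

theorem supProd_ominus_le (a b c : A) :
    m.le (m.ominus (m.supProd a b) (m.supProd a c)) (m.supProd a (m.ominus b c)) := by
  by_cases hle : m.le (m.supProd a b) (m.supProd a c)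
  · rw [show m.ominus (m.supProd a b) (m.supProd a c) = m.zero from hle]
    exact h.zero_le _
  have ha : a ≠ m.zero := by
    rintro rfl
    exact hle (by rw [supProd_zero_left]; exact h.zero_le _)
  have hb : b ≠ m.zero := by
    rintro rfl
    exact hle (by rw [supProd_zero_right]; exact h.zero_le _)
  have hbc : m.ominus b c ≠ m.zero := fun hbc => hle (h.supProd_le_supProd_right hbc a)
  by_cases hc : c = m.zero
  · rw [hc, supProd_zero_right, h.ominus_zero, h.ominus_zero]
    exact h.le_refl _
  rw [supProd_of_ne_zero ha hb, supProd_of_ne_zero ha hc, supProd_of_ne_zero ha hbc]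
  exact h.sup_ominus_sup_le a b c

end IsMV

end MVData

/-- Every MV-algebra with the product defined by the supremum for
non-zero elements is an MVW-rig: this product is associative, commutative, and
satisfies `a·0 = 0`, `a·(b ⊕ c) ≤ a·b ⊕ a·c` and `a·b ⊖ a·c ≤ a·(b ⊖ c)`. -/
theorem sup_product_is_mvwrig {A : Type*} (m : MVData A) (hmv : m.IsMV) :
    ∀ a b c : A,
      m.supProd (m.supProd a b) c = m.supProd a (m.supProd b c) ∧
      m.supProd a b = m.supProd b a ∧
      m.supProd a m.zero = m.zero ∧
      m.le (m.supProd a (m.add b c)) (m.add (m.supProd a b) (m.supProd a c)) ∧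
      m.le (m.ominus (m.supProd a b) (m.supProd a c)) (m.supProd a (m.ominus b c)) :=
  fun a b c =>
    ⟨hmv.supProd_assoc a b c, hmv.supProd_comm a b, MVData.supProd_zero_right a,
      hmv.supProd_add_le a b c, hmv.supProd_ominus_le a b c⟩
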